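/- Let α > k ≥ 1 be real numbers and C > 0. Let (z_i) be a sequence of reals with z_1 ≥ 1 satisfying z_{i+1} ≥ z_i + C·z_i^{k/α} for all i ≥ 1. Then there exists D > 0 (depending only on C, k, α) such that z_i ≥ D·i^{α/(α−k)} for all i ≥ 1. -/

import Mathlib

open Real

/-!
With `p = α / (α - k)` we have `k / α = 1 - 1 / p`, so for `w i = D * i ^ p` the increment of the
recursion is `C * w i ^ (k / α) = C * D ^ (1 - 1 / p) * i ^ (p - 1)`, while Bernoulli's inequality
gives `w (i + 1) - w i ≤ D * p * 2 ^ (p - 1) * i ^ (p - 1)`. Hence `w` is a subsolution of the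
recursion as soon as `D ^ (1 / p) ≤ C / (p * 2 ^ (p - 1))`, and since `x ↦ x + C * x ^ (k / α)` is
monotone on `[0, ∞)`, the comparison `w 1 ≤ 1 ≤ z 1` propagates to all `i`.
-/

theorem add_one_rpow_sub_rpow_le {x p : ℝ} (hx : 0 ≤ x) (hp : 1 ≤ p) :
    (x + 1) ^ p - x ^ p ≤ p * (x + 1) ^ (p - 1) := by
  have hx1 : 0 < x + 1 := by linarith
  have hs : -1 ≤ -(x + 1)⁻¹ := neg_le_neg (inv_le_one_of_one_le₀ (by linarith))
  have bernoulli := one_add_mul_self_le_rpow_one_add hs hp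
  rw [show 1 + -(x + 1)⁻¹ = x / (x + 1) by field_simp; ring, div_rpow hx hx1.le,
    le_div_iff₀ (by positivity)] at bernoulli
  rw [rpow_sub_one hx1.ne']
  have hexpand :
      (1 + p * -(x + 1)⁻¹) * (x + 1) ^ p = (x + 1) ^ p - p * ((x + 1) ^ p / (x + 1)) := by
    ring
  linarith

theorem add_one_rpow_le {x p : ℝ} (hx : 1 ≤ x) (hp : 1 ≤ p) :
    (x + 1) ^ p ≤ x ^ p + p * 2 ^ (p - 1) * x ^ (p - 1) := by
  have hx2 : (x + 1) ^ (p - 1) ≤ 2 ^ (p - 1) * x ^ (p - 1) := by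
    rw [← mul_rpow zero_le_two (by linarith)]
    exact rpow_le_rpow (by linarith) (by linarith) (by linarith)
  have hstep := add_one_rpow_sub_rpow_le (by linarith : 0 ≤ x) hp
  nlinarith

theorem mul_add_one_rpow_le {x p D C : ℝ} (hx : 1 ≤ x) (hp : 1 ≤ p) (hD : 0 ≤ D)
    (hDC : D ^ p⁻¹ * (p * 2 ^ (p - 1)) ≤ C) :
    D * (x + 1) ^ p ≤ D * x ^ p + C * (D * x ^ p) ^ (1 - p⁻¹) := by
  have hx0 : 0 ≤ x := by linarith
  have hp0 : p ≠ 0 := by positivity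
  have hsplit : D = D ^ p⁻¹ * D ^ (1 - p⁻¹) := by
    rw [← rpow_add' hD (by simp), add_sub_cancel, rpow_one]
  have hpow : (D * x ^ p) ^ (1 - p⁻¹) = D ^ (1 - p⁻¹) * x ^ (p - 1) := by
    rw [mul_rpow hD (by positivity), ← rpow_mul hx0, mul_sub, mul_one, mul_inv_cancel₀ hp0]
  calc D * (x + 1) ^ p ≤ D * (x ^ p + p * 2 ^ (p - 1) * x ^ (p - 1)) :=
        mul_le_mul_of_nonneg_left (add_one_rpow_le hx hp) hD
    _ = D * x ^ p + D ^ p⁻¹ * (p * 2 ^ (p - 1)) * (D ^ (1 - p⁻¹) * x ^ (p - 1)) := by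
        rw [mul_mul_mul_comm, ← hsplit]; ring
    _ ≤ D * x ^ p + C * (D * x ^ p) ^ (1 - p⁻¹) := by
        rw [hpow]; gcongr

theorem monotoneOn_add_mul_rpow {C γ : ℝ} (hC : 0 ≤ C) (hγ : 0 ≤ γ) :
    MonotoneOn (fun x : ℝ ↦ x + C * x ^ γ) (Set.Ici 0) := fun _ hx _ _ hxy ↦ by
  dsimp only
  gcongr

theorem le_of_monotoneOn_recursion {α : Type*} [Preorder α] {s : Set α} (hs : IsUpperSet s)
    {f : α → α} (hf : MonotoneOn f s) {w z : ℕ → α} {m : ℕ} (hws : ∀ i, m ≤ i → w i ∈ s)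
    (hw : ∀ i, m ≤ i → w (i + 1) ≤ f (w i)) (hz : ∀ i, m ≤ i → f (z i) ≤ z (i + 1))
    (hm : w m ≤ z m) : ∀ i, m ≤ i → w i ≤ z i := by
  intro i hi
  induction i, hi using Nat.le_induction with
  | base => exact hm
  | succ i hi ih =>
    calc w (i + 1) ≤ f (w i) := hw i hi
      _ ≤ f (z i) := hf (hws i hi) (hs ih (hws i hi)) ih
      _ ≤ z (i + 1) := hz i hi

theorem polynomial_lower_bound_of_recursion (k α C : ℝ) (hk : 1 ≤ k) (hkα : k < α)
    (hC : 0 < C) (z : ℕ → ℝ) (h1 : 1 ≤ z 1)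
    (hrec : ∀ i : ℕ, 1 ≤ i → z i + C * z i ^ (k / α) ≤ z (i + 1)) :
    ∃ D : ℝ, 0 < D ∧ ∀ i : ℕ, 1 ≤ i → D * (i : ℝ) ^ (α / (α - k)) ≤ z i := by
  set p := α / (α - k)
  have hαk : 0 < α - k := by linarith
  have hα : α ≠ 0 := by linarith
  have hp : 1 ≤ p := (one_le_div hαk).mpr (by linarith)
  have hkp : k / α = 1 - p⁻¹ := by simp only [p]; field_simp; ring
  set m := min 1 (C / (p * 2 ^ (p - 1)))
  have hm : 0 < m := lt_min one_pos (by positivity)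
  refine ⟨m ^ p, by positivity, le_of_monotoneOn_recursion (isUpperSet_Ici 0)
    (monotoneOn_add_mul_rpow hC.le (by rw [hkp]; simp [inv_le_one_of_one_le₀ hp]))
    (fun i _ ↦ Set.mem_Ici.mpr (by positivity)) (fun i hi ↦ ?_) hrec ?_⟩
  · rw [hkp]
    push_cast
    refine mul_add_one_rpow_le (by exact_mod_cast hi) hp (by positivity) ?_
    rw [rpow_rpow_inv hm.le (by positivity), ← le_div_iff₀ (by positivity)]
    exact min_le_right _ _
  · simpa using (rpow_le_one hm.le (min_le_left _ _) (by positivity)).trans h1
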